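/- Suppose log(1/Z) ≤ n/16, Z ≤ 1/e, and n ≥ 8e. Then for every interval I ⊂ ℝ of length at most 2 and every x ∈ I, one has 4·|g'(s)| ≤ (1/n)·x·g(x) + Z for every s ∈ I at which g is differentiable. -/

import Mathlib

/-!
Where `0 < g̃(s) < 1` the clamp is inactive and
`4 g'(s) = Z e^{-s²/(16n)} / √π + s g̃(s) / (2n)`; elsewhere `g` is constant on a half-line
starting at `s`, so `g'(s) = 0`. Since `g̃` is increasing and `g̃(n) ≥ 1` (this is where
`log(1/Z) ≤ n/16` enters), only `0 < s < n` matters, and it suffices to bound `s g̃(s)` by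
`2 x g(x) + 2nZ(1 - 1/√π)`: for `s ≤ x` by monotonicity of `g`, for `s ≤ 8` by
`erf t ≤ 2t/√π`, and for `8 < s ≤ x + 2` because concavity of `erf` on `[0, ∞)` makes
`erf(t)/t` decreasing, while `s² e^{s²/(16n)} ≤ 2 x² e^{x²/(16n)}`.
-/

/-- The Gauss error function `erf(x) = (2/√π) ∫₀ˣ e^{−s²} ds`. -/
noncomputable def erf (x : ℝ) : ℝ :=
  (2 / Real.sqrt Real.pi) * ∫ s in (0:ℝ)..x, Real.exp (-s ^ 2)

/-- The unclipped confidence function `g̃(x) = √(n/8) · Z · erf(x/√(8n)) · e^{x²/(16n)}`. -/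
noncomputable def gtilde (n Z x : ℝ) : ℝ :=
  Real.sqrt (n / 8) * Z * erf (x / Real.sqrt (8 * n)) * Real.exp (x ^ 2 / (16 * n))

/-- The confidence function `g(x)`, the projection of `g̃(x)` onto `[0,1]`. -/
noncomputable def gconf (n Z x : ℝ) : ℝ := min (max (gtilde n Z x) 0) 1

open Real Set

lemma continuous_exp_neg_sq : Continuous fun s : ℝ => exp (-s ^ 2) := by fun_prop

lemma hasDerivAt_erf (x : ℝ) : HasDerivAt erf (2 / √π * exp (-x ^ 2)) x :=
  ((continuous_exp_neg_sq.integral_hasStrictDerivAt 0 x).hasDerivAt).const_mul _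

lemma differentiable_erf : Differentiable ℝ erf := fun x => (hasDerivAt_erf x).differentiableAt

lemma erf_zero : erf 0 = 0 := by simp [erf]

lemma erf_strictMono : StrictMono erf :=
  strictMono_of_deriv_pos fun x => by rw [(hasDerivAt_erf x).deriv]; positivity

lemma erf_nonneg {x : ℝ} (hx : 0 ≤ x) : 0 ≤ erf x := erf_zero ▸ erf_strictMono.monotone hx

lemma erf_nonpos {x : ℝ} (hx : x ≤ 0) : erf x ≤ 0 := erf_zero ▸ erf_strictMono.monotone hx

lemma erf_le_mul {x : ℝ} (hx : 0 ≤ x) : erf x ≤ 2 / √π * x := by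
  have h : ∫ s in (0:ℝ)..x, exp (-s ^ 2) ≤ ∫ _ in (0:ℝ)..x, (1:ℝ) :=
    intervalIntegral.integral_mono_on hx (continuous_exp_neg_sq.intervalIntegrable 0 x)
      intervalIntegrable_const fun s _ => exp_le_one_iff.2 (by nlinarith)
  simp only [intervalIntegral.integral_const, smul_eq_mul, mul_one, sub_zero] at h
  exact mul_le_mul_of_nonneg_left h (by positivity)

lemma concaveOn_erf : ConcaveOn ℝ (Ici 0) erf := by
  refine AntitoneOn.concaveOn_of_deriv (convex_Ici 0) differentiable_erf.continuous.continuousOn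
    differentiable_erf.differentiableOn fun x hx y hy hxy => ?_
  rw [interior_Ici] at hx hy
  rw [(hasDerivAt_erf x).deriv, (hasDerivAt_erf y).deriv]
  gcongr
  exact hx.le

lemma mul_erf_le_erf_mul {l t : ℝ} (hl0 : 0 ≤ l) (hl1 : l ≤ 1) (ht : 0 ≤ t) :
    l * erf t ≤ erf (l * t) := by
  simpa [erf_zero] using
    concaveOn_erf.2 (mem_Ici.2 ht) self_mem_Ici hl0 (sub_nonneg.2 hl1) (by ring)

lemma erf_one_ge : 4 / (3 * √π) ≤ erf 1 := by
  have hsq : IntervalIntegrable (fun s : ℝ => s ^ 2) MeasureTheory.volume 0 1 :=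
    (continuous_pow 2).intervalIntegrable 0 1
  have h : ∫ s in (0:ℝ)..1, (1 - s ^ 2) ≤ ∫ s in (0:ℝ)..1, exp (-s ^ 2) :=
    intervalIntegral.integral_mono_on zero_le_one (intervalIntegrable_const.sub hsq)
      (continuous_exp_neg_sq.intervalIntegrable 0 1) fun s _ => by
        linarith [add_one_le_exp (-s ^ 2)]
  have h23 : ∫ s in (0:ℝ)..1, (1 - s ^ 2) = 2 / 3 := by
    rw [intervalIntegral.integral_sub intervalIntegrable_const hsq]
    norm_num [integral_pow]
  rw [h23] at h
  unfold erf
  calc 4 / (3 * √π) = 2 / √π * (2 / 3) := by field_simp; ring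
    _ ≤ _ := by gcongr

section gtilde

variable {n : ℝ} (Z : ℝ)

lemma sqrt_div_eight_eq (hn : 0 < n) : √(n / 8) = n / √(8 * n) := by
  rw [eq_div_iff (by positivity), ← sqrt_mul (by positivity),
    show n / 8 * (8 * n) = n ^ 2 by ring, sqrt_sq hn.le]

lemma hasDerivAt_gtilde (hn : 0 < n) (x : ℝ) :
    HasDerivAt (gtilde n Z)
      (Z * exp (-x ^ 2 / (16 * n)) / (4 * √π) + x * gtilde n Z x / (8 * n)) x := by
  have hσ : √(8 * n) ^ 2 = 8 * n := sq_sqrt (by positivity)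
  have hexp :
      exp (-(x / √(8 * n)) ^ 2) * exp (x ^ 2 / (16 * n)) = exp (-x ^ 2 / (16 * n)) := by
    rw [← exp_add, div_pow, hσ]; congr 1; field_simp; ring
  have h := (((hasDerivAt_erf _).comp x ((hasDerivAt_id x).div_const √(8 * n))).const_mul
    (√(n / 8) * Z)).mul ((hasDerivAt_pow 2 x).div_const (16 * n)).exp
  refine (show HasDerivAt (gtilde n Z) _ x from h).congr_deriv ?_
  simp only [gtilde, Function.comp_apply, id_eq, ← hexp, sqrt_div_eight_eq hn]
  have hσ0 : √(8 * n) ≠ 0 := by positivity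
  set σ := √(8 * n)
  field_simp
  linear_combination (-128 * Z * exp (-(x ^ 2 / σ ^ 2))) * hσ

lemma gtilde_nonneg (hZ : 0 ≤ Z) {x : ℝ} (hx : 0 ≤ x) : 0 ≤ gtilde n Z x := by
  have := erf_nonneg (div_nonneg hx (sqrt_nonneg (8 * n)))
  unfold gtilde; positivity

lemma gtilde_nonpos (hZ : 0 ≤ Z) {x : ℝ} (hx : x ≤ 0) : gtilde n Z x ≤ 0 :=
  mul_nonpos_of_nonpos_of_nonneg (mul_nonpos_of_nonneg_of_nonpos (by positivity)
    (erf_nonpos (div_nonpos_of_nonpos_of_nonneg hx (sqrt_nonneg _)))) (exp_pos _).le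

lemma gtilde_strictMono (hn : 0 < n) (hZ : 0 < Z) : StrictMono (gtilde n Z) := by
  refine strictMono_of_deriv_pos fun x => ?_
  have hxg : 0 ≤ x * gtilde n Z x := by
    rcases le_total 0 x with hx | hx
    · exact mul_nonneg hx (gtilde_nonneg Z hZ.le hx)
    · exact mul_nonneg_of_nonpos_of_nonpos hx (gtilde_nonpos Z hZ.le hx)
  rw [(hasDerivAt_gtilde Z hn x).deriv]
  positivity

lemma gtilde_le (hn : 0 < n) (hZ : 0 ≤ Z) {x : ℝ} (hx : 0 ≤ x) :
    gtilde n Z x ≤ Z * x * exp (x ^ 2 / (16 * n)) / (4 * √π) := by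
  have h := erf_le_mul (div_nonneg hx (sqrt_nonneg (8 * n)))
  have hσ : √(8 * n) ^ 2 = 8 * n := sq_sqrt (by positivity)
  rw [gtilde, sqrt_div_eight_eq hn]
  set σ := √(8 * n)
  calc n / σ * Z * erf (x / σ) * exp (x ^ 2 / (16 * n))
      ≤ n / σ * Z * (2 / √π * (x / σ)) * exp (x ^ 2 / (16 * n)) := by gcongr
    _ = Z * x * exp (x ^ 2 / (16 * n)) / (4 * √π) := by
        field_simp; rw [hσ]; field_simp; ring

lemma gtilde_mul_le (hn : 0 < n) (hZ : 0 ≤ Z) {x s : ℝ} (hx : 0 < x) (hxs : x ≤ s) :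
    gtilde n Z s * (x * exp (x ^ 2 / (16 * n)))
      ≤ gtilde n Z x * (s * exp (s ^ 2 / (16 * n))) := by
  have hs : 0 < s := hx.trans_le hxs
  have h := mul_erf_le_erf_mul (div_nonneg hx.le hs.le) ((div_le_one hs).2 hxs)
    (div_nonneg hs.le (sqrt_nonneg (8 * n)))
  rw [div_mul_div_cancel₀ hs.ne'] at h
  have := mul_le_mul_of_nonneg_left h
    (by positivity : 0 ≤ √(n / 8) * Z * s * exp (x ^ 2 / (16 * n)) * exp (s ^ 2 / (16 * n)))
  unfold gtilde
  field_simp at this ⊢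
  linarith

lemma one_le_gtilde_self (hn : 15 ≤ n) (hZ : exp (-(n / 16)) ≤ Z) : 1 ≤ gtilde n Z n := by
  have hn0 : 0 < n := by linarith
  have ht1 : 1 ≤ √(n / 8) := one_le_sqrt.2 (by linarith)
  have ht : 3 * √π ≤ 4 * √(n / 8) := by
    refine (pow_le_pow_iff_left₀ (by positivity) (by positivity) two_ne_zero).1 ?_
    rw [mul_pow, mul_pow, sq_sqrt pi_pos.le, sq_sqrt (by positivity)]
    linarith [pi_lt_d2]
  have herf : 4 / (3 * √π) ≤ erf √(n / 8) :=
    erf_one_ge.trans (erf_strictMono.monotone ht1)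
  have hZe : 1 ≤ Z * exp (n / 16) := by
    calc (1 : ℝ) = exp (-(n / 16)) * exp (n / 16) := by rw [← exp_add]; simp
      _ ≤ _ := by gcongr
  have h1 : 1 ≤ √(n / 8) * erf √(n / 8) := by
    calc (1 : ℝ) ≤ √(n / 8) * (4 / (3 * √π)) := by
          rw [mul_div, le_div_iff₀ (by positivity)]; linarith
      _ ≤ _ := by gcongr
  calc (1 : ℝ) ≤ √(n / 8) * erf √(n / 8) * (Z * exp (n / 16)) :=
        one_le_mul_of_one_le_of_one_le h1 hZe
    _ = gtilde n Z n := by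
        rw [gtilde, ← sqrt_div_eight_eq hn0, show n ^ 2 / (16 * n) = n / 16 by field_simp]
        ring

end gtilde

lemma deriv_eq_zero_of_eqOn_const {𝕜 F : Type*} [NontriviallyNormedField 𝕜]
    [NormedAddCommGroup F] [NormedSpace 𝕜 F] {f : 𝕜 → F} {t : Set 𝕜} {s : 𝕜} {c : F}
    (hf : DifferentiableAt 𝕜 f s) (ht : UniqueDiffWithinAt 𝕜 t s) (hs : s ∈ t)
    (h : EqOn f (fun _ => c) t) : deriv f s = 0 := by
  rw [← hf.derivWithin ht, derivWithin_congr h (h hs), derivWithin_fun_const, Pi.zero_apply]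

section gconf

variable {n Z : ℝ}

lemma gconf_eq_gtilde {x : ℝ} (h0 : 0 ≤ gtilde n Z x) (h1 : gtilde n Z x ≤ 1) :
    gconf n Z x = gtilde n Z x := by
  rw [gconf, max_eq_left h0, min_eq_left h1]

lemma gconf_nonneg (x : ℝ) : 0 ≤ gconf n Z x := le_min (le_max_right _ _) zero_le_one

lemma gconf_mono (hn : 0 < n) (hZ : 0 < Z) : Monotone (gconf n Z) := fun _ _ h =>
  min_le_min_right _ (max_le_max_right _ ((gtilde_strictMono Z hn hZ).monotone h))

lemma mul_gconf_nonneg (hZ : 0 ≤ Z) (x : ℝ) : 0 ≤ x * gconf n Z x := by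
  rcases le_total 0 x with hx | hx
  · exact mul_nonneg hx (gconf_nonneg x)
  · rw [gconf, max_eq_right (gtilde_nonpos Z hZ hx)]; simp

lemma hasDerivAt_gconf (hn : 0 < n) {s : ℝ} (h0 : 0 < gtilde n Z s) (h1 : gtilde n Z s < 1) :
    HasDerivAt (gconf n Z)
      (Z * exp (-s ^ 2 / (16 * n)) / (4 * √π) + s * gtilde n Z s / (8 * n)) s := by
  have hg := hasDerivAt_gtilde Z hn s
  refine hg.congr_of_eventuallyEq ?_
  filter_upwards [hg.continuousAt.eventually (Ioo_mem_nhds h0 h1)] with t ht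
  exact gconf_eq_gtilde ht.1.le ht.2.le

lemma deriv_gconf_eq_zero (hn : 0 < n) (hZ : 0 < Z) {s : ℝ}
    (hs : DifferentiableAt ℝ (gconf n Z) s) (h : gtilde n Z s ≤ 0 ∨ 1 ≤ gtilde n Z s) :
    deriv (gconf n Z) s = 0 := by
  have hmono := (gtilde_strictMono Z hn hZ).monotone
  rcases h with h | h
  · refine deriv_eq_zero_of_eqOn_const hs (uniqueDiffOn_Iic s s self_mem_Iic) self_mem_Iic
      (c := 0) fun t ht => ?_
    rw [gconf, max_eq_right ((hmono ht).trans h)]; simp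
  · refine deriv_eq_zero_of_eqOn_const hs (uniqueDiffOn_Ici s s self_mem_Ici) self_mem_Ici
      (c := 1) fun t ht => ?_
    have h1 := h.trans (hmono ht)
    rw [gconf, max_eq_left (zero_le_one.trans h1), min_eq_right h1]

end gconf

section estimates

variable {n Z : ℝ}

lemma sq_mul_exp_le (hn : 21 ≤ n) {s x : ℝ} (hs : 8 ≤ s) (hsn : s ≤ n) (hx : s - 2 ≤ x) :
    s ^ 2 * exp (s ^ 2 / (16 * n)) ≤ 2 * (x ^ 2 * exp (x ^ 2 / (16 * n))) := by
  have hn0 : 0 < n := by linarith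
  have hx2 : (s - 2) ^ 2 ≤ x ^ 2 := pow_le_pow_left₀ (by linarith) hx 2
  have hq : exp (s / (4 * n)) ≤ 4 * n / (4 * n - s) := by
    have := exp_bound_div_one_sub_of_interval (x := s / (4 * n)) (by positivity)
      ((div_lt_one (by positivity)).2 (by linarith))
    rwa [one_sub_div (by positivity), one_div_div] at this
  have hexp : exp (s ^ 2 / (16 * n)) ≤ exp (x ^ 2 / (16 * n)) * (4 * n / (4 * n - s)) := by
    calc exp (s ^ 2 / (16 * n))
        = exp (x ^ 2 / (16 * n)) * exp ((s ^ 2 - x ^ 2) / (16 * n)) := by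
          rw [← exp_add]; ring_nf
      _ ≤ exp (x ^ 2 / (16 * n)) * exp (s / (4 * n)) := by
          gcongr _ * exp ?_
          rw [div_le_div_iff₀ (by positivity) (by positivity)]
          nlinarith
      _ ≤ _ := by gcongr
  have hpoly : 2 * n * s ^ 2 ≤ (4 * n - s) * (s - 2) ^ 2 := by
    nlinarith [mul_nonneg (sub_nonneg.2 hs) (sub_nonneg.2 hsn), mul_nonneg (sub_nonneg.2 hs)
      (sub_nonneg.2 hn), mul_nonneg (mul_nonneg (sub_nonneg.2 hs) (sub_nonneg.2 hs))
      (sub_nonneg.2 hsn)]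
  calc s ^ 2 * exp (s ^ 2 / (16 * n))
      ≤ s ^ 2 * (4 * n / (4 * n - s)) * exp (x ^ 2 / (16 * n)) := by
        rw [mul_assoc, mul_comm (_ / _)]; gcongr
    _ ≤ 2 * x ^ 2 * exp (x ^ 2 / (16 * n)) := by
        gcongr ?_ * _
        rw [mul_div_assoc', div_le_iff₀ (by linarith)]
        nlinarith [mul_le_mul_of_nonneg_left hx2 (by linarith : (0 : ℝ) ≤ 4 * n - s)]
    _ = _ := by ring

lemma mul_gtilde_le_of_le_eight (hn : 21 ≤ n) (hZ : 0 ≤ Z) {s : ℝ} (hs0 : 0 ≤ s)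
    (hs : s ≤ 8) :
    s * gtilde n Z s ≤ 2 * n * (Z - Z / √π) := by
  have hn0 : 0 < n := by linarith
  have hπ : 3 / 2 ≤ √π := le_sqrt_of_sq_le (by linarith [pi_gt_three])
  have hE : exp (s ^ 2 / (16 * n)) ≤ 5 / 4 := by
    calc exp (s ^ 2 / (16 * n)) ≤ exp (1 / 5) :=
          exp_le_exp.2 ((div_le_iff₀ (by positivity)).2 (by nlinarith))
      _ ≤ 1 / (1 - 1 / 5) := exp_bound_div_one_sub_of_interval (by norm_num) (by norm_num)
      _ = 5 / 4 := by norm_num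
  calc s * gtilde n Z s ≤ s * (Z * s * exp (s ^ 2 / (16 * n)) / (4 * √π)) := by
        gcongr; exact gtilde_le Z hn0 hZ hs0
    _ = Z * s ^ 2 * exp (s ^ 2 / (16 * n)) / (4 * √π) := by ring
    _ ≤ Z * 8 ^ 2 * (5 / 4) / (4 * √π) := by gcongr
    _ ≤ 2 * n * (Z - Z / √π) := by
        rw [div_le_iff₀ (by positivity)]
        field_simp
        nlinarith [mul_nonneg hZ (sub_nonneg.2 hπ), mul_nonneg (mul_nonneg hZ (sub_nonneg.2 hπ))
          (sub_nonneg.2 hn)]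

lemma mul_gtilde_le_two_mul (hn : 21 ≤ n) (hZ : 0 ≤ Z) {s x : ℝ} (hs : 8 ≤ s)
    (hsn : s ≤ n) (hx : s - 2 ≤ x) (hxs : x ≤ s) :
    s * gtilde n Z s ≤ 2 * (x * gtilde n Z x) := by
  have hn0 : 0 < n := by linarith
  have hx0 : 0 < x := by linarith
  have hgx := gtilde_nonneg Z hZ hx0.le (n := n)
  refine le_of_mul_le_mul_right ?_ (by positivity : 0 < x * exp (x ^ 2 / (16 * n)))
  calc s * gtilde n Z s * (x * exp (x ^ 2 / (16 * n)))
      = s * (gtilde n Z s * (x * exp (x ^ 2 / (16 * n)))) := by ring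
    _ ≤ s * (gtilde n Z x * (s * exp (s ^ 2 / (16 * n)))) :=
        mul_le_mul_of_nonneg_left (gtilde_mul_le Z hn0 hZ hx0 hxs) (by linarith)
    _ = gtilde n Z x * (s ^ 2 * exp (s ^ 2 / (16 * n))) := by ring
    _ ≤ gtilde n Z x * (2 * (x ^ 2 * exp (x ^ 2 / (16 * n)))) :=
        mul_le_mul_of_nonneg_left (sq_mul_exp_le hn hs hsn hx) hgx
    _ = 2 * (x * gtilde n Z x) * (x * exp (x ^ 2 / (16 * n))) := by ring

lemma mul_gtilde_le (hn : 21 ≤ n) (hZ : 0 < Z) {s x : ℝ} (hs0 : 0 ≤ s)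
    (hs1 : gtilde n Z s ≤ 1) (hsn : s ≤ n) (hx : s - 2 ≤ x) :
    s * gtilde n Z s ≤ 2 * (x * gconf n Z x) + 2 * n * (Z - Z / √π) := by
  have hn0 : 0 < n := by linarith
  have hgs0 := gtilde_nonneg Z hZ.le hs0 (n := n)
  have hxg := mul_gconf_nonneg hZ.le x (n := n)
  have hZπ : 0 ≤ Z - Z / √π :=
    sub_nonneg.2 (div_le_self hZ.le (one_le_sqrt.2 (by linarith [pi_gt_three])))
  rcases le_total s x with hsx | hxs
  · have h := mul_le_mul hsx (gconf_mono hn0 hZ hsx) (gconf_nonneg s) (hs0.trans hsx)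
    rw [gconf_eq_gtilde hgs0 hs1] at h
    nlinarith
  rcases le_total s 8 with hs8 | hs8
  · nlinarith [mul_gtilde_le_of_le_eight hn hZ.le hs0 hs8]
  · have hgx0 := gtilde_nonneg Z hZ.le (by linarith : 0 ≤ x) (n := n)
    have hgx1 := ((gtilde_strictMono Z hn0 hZ).monotone hxs).trans hs1
    rw [gconf_eq_gtilde hgx0 hgx1]
    nlinarith [mul_gtilde_le_two_mul hn hZ.le hs8 hsn hx hxs]

lemma four_mul_deriv_gtilde_le (hn : 21 ≤ n) (hZ : 0 < Z) {s x : ℝ} (hs0 : 0 ≤ s)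
    (hs1 : gtilde n Z s ≤ 1) (hsn : s ≤ n) (hx : s - 2 ≤ x) :
    4 * (Z * exp (-s ^ 2 / (16 * n)) / (4 * √π) + s * gtilde n Z s / (8 * n))
      ≤ 1 / n * (x * gconf n Z x) + Z := by
  have hn0 : 0 < n := by linarith
  have hE : exp (-s ^ 2 / (16 * n)) ≤ 1 := exp_le_one_iff.2 (by
    rw [neg_div]; exact neg_nonpos.2 (by positivity))
  have key := mul_gtilde_le hn hZ hs0 hs1 hsn hx
  calc 4 * (Z * exp (-s ^ 2 / (16 * n)) / (4 * √π) + s * gtilde n Z s / (8 * n))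
      = Z * exp (-s ^ 2 / (16 * n)) / √π + s * gtilde n Z s / (2 * n) := by field_simp; ring
    _ ≤ Z / √π + (2 * (x * gconf n Z x) + 2 * n * (Z - Z / √π)) / (2 * n) := by
        gcongr; exact mul_le_of_le_one_right hZ.le hE
    _ = 1 / n * (x * gconf n Z x) + Z := by field_simp; ring

end estimates

theorem gconf_deriv_bound_general
    (n Z : ℝ) (hn0 : 0 < n) (hZ0 : 0 < Z)
    (hlog : Real.log (1 / Z) ≤ n / 16)
    (hn : n ≥ 8 * Real.exp 1)
    (a b : ℝ) (hlen : b - a ≤ 2)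
    (x : ℝ) (hx : x ∈ Set.Icc a b)
    (s : ℝ) (hs : s ∈ Set.Icc a b)
    (hdiff : DifferentiableAt ℝ (gconf n Z) s) :
    4 * |deriv (gconf n Z) s| ≤ (1 / n) * (x * gconf n Z x) + Z := by
  have hn21 : 21 ≤ n := by linarith [exp_one_gt_d9]
  have hZn : exp (-(n / 16)) ≤ Z := by
    rw [one_div, log_inv] at hlog
    exact (exp_le_exp.2 (by linarith)).trans_eq (exp_log hZ0)
  by_cases hclamp : gtilde n Z s ≤ 0 ∨ 1 ≤ gtilde n Z s
  · rw [deriv_gconf_eq_zero hn0 hZ0 hdiff hclamp, abs_zero, mul_zero]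
    exact add_nonneg (mul_nonneg (by positivity) (mul_gconf_nonneg hZ0.le x)) hZ0.le
  rw [not_or, not_le, not_le] at hclamp
  obtain ⟨h0, h1⟩ := hclamp
  have hs0 : 0 < s := lt_of_not_ge fun h => (gtilde_nonpos Z hZ0.le h).not_gt h0
  have hsn : s < n := (gtilde_strictMono Z hn0 hZ0).lt_iff_lt.1
    (h1.trans_le (one_le_gtilde_self Z (by linarith) hZn))
  have hderiv_nonneg :
      0 ≤ Z * exp (-s ^ 2 / (16 * n)) / (4 * √π) + s * gtilde n Z s / (8 * n) :=
    add_nonneg (by positivity) (div_nonneg (mul_nonneg hs0.le h0.le) (by positivity))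
  rw [(hasDerivAt_gconf hn0 h0 h1).deriv, abs_of_nonneg hderiv_nonneg]
  exact four_mul_deriv_gtilde_le hn21 hZ0 hs0.le h1.le hsn.le (by linarith [hx.1, hs.2])

/-- **Lemma (derivative bound for the confidence function over short segments).** -/
theorem gconf_deriv_bound
    (n Z : ℝ) (hn0 : 0 < n) (hZ0 : 0 < Z)
    (hlog : Real.log (1 / Z) ≤ n / 16) (hZ : Z ≤ 1 / Real.exp 1)
    (hn : n ≥ 8 * Real.exp 1)
    (U : ℝ) (hUpos : 0 < U) (hUdef : gtilde n Z U = 1)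
    (hUuniq : ∀ y, 0 < y → gtilde n Z y = 1 → y = U)
    (a b : ℝ) (hab : a ≤ b) (hlen : b - a ≤ 2)
    (x : ℝ) (hx : x ∈ Set.Icc a b)
    (s : ℝ) (hs : s ∈ Set.Icc a b)
    (hdiff : DifferentiableAt ℝ (gconf n Z) s) :
    4 * |deriv (gconf n Z) s| ≤ (1 / n) * (x * gconf n Z x) + Z :=
  gconf_deriv_bound_general n Z hn0 hZ0 hlog hn a b hlen x hx s hs hdiff
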